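/- Let f satisfy restricted strong convexity with μ̄ = μ − 3τ(s+s*) replaced by μ̄ > 0 on directions that are (s+s*)-sparse, let θ̂ be s*-sparse and θ_t be s-sparse, and suppose f(θ_t) ≤ f(θ̂). Then ‖θ_t − θ̂‖ ≤ 2‖HT_{s+s*}(∇f(θ̂))‖ / μ̄, and in particular ‖θ_t − θ̂‖² ≤ 36‖HT_{s+s*}(∇f(θ̂))‖² / μ̄². -/

import Mathlib

/-!
Write `v = θt - θhat` and `g = ∇f(θhat)`. Restricted strong convexity at the pair
`(θt, θhat)`, whose difference is `(s + s*)`-sparse, together with `f θt ≤ f θhat` gives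
`μ̄/2 ‖v‖² ≤ -⟪g, v⟫`. Since `v` vanishes off its support `S`, `⟪g, v⟫ = ⟪g|_S, v⟫`, and
`‖g|_S‖ ≤ ‖HT_{s+s*} g‖` because hard thresholding keeps the `s + s*` coordinates of largest
energy. Cauchy–Schwarz yields `μ̄/2 ‖v‖² ≤ ‖HT g‖ ‖v‖`, hence `‖v‖ ≤ 2 ‖HT g‖ / μ̄`; squaring gives
the second bound with constant `4 ≤ 36`.
-/

open Finset
open scoped RealInnerProductSpace

noncomputable def htSet {d : ℕ} (k : ℕ) (x : EuclideanSpace ℝ (Fin d)) : Finset (Fin d) :=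
  (Finset.exists_max_image ((Finset.univ : Finset (Fin d)).powersetCard (min k d))
    (fun S => ∑ i ∈ S, (x i) ^ 2)
    ((Finset.powersetCard_nonempty).2 (by simp))).choose

/-- Hard thresholding: keep the `k` entries of largest magnitude, zero the rest. -/
noncomputable def HT {d : ℕ} (k : ℕ) (x : EuclideanSpace ℝ (Fin d)) : EuclideanSpace ℝ (Fin d) :=
  WithLp.toLp 2 (fun i => if i ∈ htSet k x then x i else 0)

/-- Support of a vector. -/
noncomputable def supp {d : ℕ} (x : EuclideanSpace ℝ (Fin d)) : Finset (Fin d) :=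
  Finset.univ.filter (fun i => x i ≠ 0)

/-- Restriction of a vector to an index set. -/
noncomputable def restr {d : ℕ} (S : Finset (Fin d)) (x : EuclideanSpace ℝ (Fin d)) :
    EuclideanSpace ℝ (Fin d) :=
  WithLp.toLp 2 (fun i => if i ∈ S then x i else 0)

/-- ℓ1 norm. -/
noncomputable def l1norm {d : ℕ} (x : EuclideanSpace ℝ (Fin d)) : ℝ := ∑ i, |x i|

/-- ℓ∞ norm. -/
noncomputable def linf {d : ℕ} (x : EuclideanSpace ℝ (Fin d)) : ℝ := ⨆ i, |x i|

lemma mem_supp {d : ℕ} {x : EuclideanSpace ℝ (Fin d)} {i : Fin d} : i ∈ supp x ↔ x i ≠ 0 := by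
  rw [supp, mem_filter]
  exact and_iff_right (mem_univ i)

lemma sq_norm_restr {d : ℕ} (S : Finset (Fin d)) (x : EuclideanSpace ℝ (Fin d)) :
    ‖restr S x‖ ^ 2 = ∑ i ∈ S, x i ^ 2 := by
  simp only [EuclideanSpace.real_norm_sq_eq, restr, ite_pow, zero_pow two_ne_zero,
    Finset.sum_ite_mem_eq]

lemma HT_eq_restr_htSet {d : ℕ} (k : ℕ) (x : EuclideanSpace ℝ (Fin d)) :
    HT k x = restr (htSet k x) x := rfl

lemma htSet_spec {d : ℕ} (k : ℕ) (x : EuclideanSpace ℝ (Fin d)) :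
    htSet k x ∈ (Finset.univ : Finset (Fin d)).powersetCard (min k d) ∧
    ∀ S ∈ (Finset.univ : Finset (Fin d)).powersetCard (min k d),
      ∑ i ∈ S, x i ^ 2 ≤ ∑ i ∈ htSet k x, x i ^ 2 :=
  (Finset.exists_max_image _ _ (Finset.powersetCard_nonempty.2 (by simp))).choose_spec

lemma sum_sq_le_sq_norm_HT {d k : ℕ} (x : EuclideanSpace ℝ (Fin d)) {S : Finset (Fin d)}
    (hS : S.card ≤ k) : ∑ i ∈ S, x i ^ 2 ≤ ‖HT k x‖ ^ 2 := by
  have hSd : S.card ≤ min k d := le_min hS (card_le_univ S |>.trans_eq (Fintype.card_fin d))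
  obtain ⟨T, hST, -, hT⟩ := exists_subsuperset_card_eq (subset_univ S) hSd
    (by simp only [card_univ, Fintype.card_fin, min_le_right])
  rw [HT_eq_restr_htSet, sq_norm_restr]
  calc ∑ i ∈ S, x i ^ 2 ≤ ∑ i ∈ T, x i ^ 2 :=
        sum_le_sum_of_subset_of_nonneg hST fun i _ _ => sq_nonneg _
    _ ≤ ∑ i ∈ htSet k x, x i ^ 2 :=
        (htSet_spec k x).2 T (mem_powersetCard.2 ⟨subset_univ T, hT⟩)

lemma norm_restr_le_norm_HT {d k : ℕ} (x : EuclideanSpace ℝ (Fin d)) {S : Finset (Fin d)}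
    (hS : S.card ≤ k) : ‖restr S x‖ ≤ ‖HT k x‖ :=
  pow_le_pow_iff_left₀ (norm_nonneg _) (norm_nonneg _) two_ne_zero |>.1 <|
    (sq_norm_restr S x).trans_le (sum_sq_le_sq_norm_HT x hS)

lemma inner_restr_supp {d : ℕ} (g v : EuclideanSpace ℝ (Fin d)) :
    ⟪restr (supp v) g, v⟫ = ⟪g, v⟫ := by
  simp only [PiLp.inner_apply, RCLike.inner_apply, conj_trivial, restr]
  refine sum_congr rfl fun i _ => ?_
  by_cases hi : i ∈ supp v
  · rw [if_pos hi]
  · rw [if_neg hi, not_not.1 (mt mem_supp.2 hi), zero_mul, zero_mul]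

/-- Cauchy–Schwarz on the support of `v`. -/
lemma abs_inner_le_norm_HT_mul_norm {d k : ℕ} (g : EuclideanSpace ℝ (Fin d))
    {v : EuclideanSpace ℝ (Fin d)} (hv : (supp v).card ≤ k) :
    |⟪g, v⟫| ≤ ‖HT k g‖ * ‖v‖ := by
  rw [← inner_restr_supp]
  exact (abs_real_inner_le_norm _ _).trans <|
    mul_le_mul_of_nonneg_right (norm_restr_le_norm_HT g hv) (norm_nonneg v)

lemma supp_sub_subset {d : ℕ} (x y : EuclideanSpace ℝ (Fin d)) :
    supp (x - y) ⊆ supp x ∪ supp y := by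
  intro i hi
  simp only [mem_union, mem_supp, PiLp.sub_apply] at hi ⊢
  by_contra! h
  exact hi (by rw [h.1, h.2, sub_zero])

lemma card_supp_sub_le {d : ℕ} (x y : EuclideanSpace ℝ (Fin d)) :
    (supp (x - y)).card ≤ (supp x).card + (supp y).card :=
  (card_le_card (supp_sub_subset x y)).trans (card_union_le _ _)

lemma le_div_of_mul_sq_le_mul {a b r : ℝ} (ha : 0 < a) (hb : 0 ≤ b) (hr : 0 ≤ r)
    (h : a * r ^ 2 ≤ b * r) : r ≤ b / a := by
  rw [le_div_iff₀ ha]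
  rcases hr.eq_or_lt with rfl | hr
  · simpa using hb
  · nlinarith

theorem stmt9_general (d s sstar : ℕ) (μbar : ℝ) (hμ : 0 < μbar)
    (f : EuclideanSpace ℝ (Fin d) → ℝ)
    (hrsc : ∀ θ1 θ2 : EuclideanSpace ℝ (Fin d), (supp (θ1 - θ2)).card ≤ s + sstar →
      f θ1 - f θ2 - ⟪gradient f θ2, θ1 - θ2⟫ ≥ μbar / 2 * ‖θ1 - θ2‖ ^ 2)
    (θt θhat : EuclideanSpace ℝ (Fin d))
    (hθt : (supp θt).card ≤ s) (hθhat : (supp θhat).card ≤ sstar)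
    (hle : f θt ≤ f θhat) :
    ‖θt - θhat‖ ≤ 2 * ‖HT (s + sstar) (gradient f θhat)‖ / μbar ∧
      ‖θt - θhat‖ ^ 2 ≤ 36 * ‖HT (s + sstar) (gradient f θhat)‖ ^ 2 / μbar ^ 2 := by
  set H := ‖HT (s + sstar) (gradient f θhat)‖
  have hsparse : (supp (θt - θhat)).card ≤ s + sstar :=
    (card_supp_sub_le θt θhat).trans (add_le_add hθt hθhat)
  have hquad : μbar / 2 * ‖θt - θhat‖ ^ 2 ≤ H * ‖θt - θhat‖ := by
    have hcs := abs_inner_le_norm_HT_mul_norm (gradient f θhat) hsparse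
    linarith [hrsc θt θhat hsparse, neg_abs_le ⟪gradient f θhat, θt - θhat⟫]
  have hdist : ‖θt - θhat‖ ≤ 2 * H / μbar := by
    have := le_div_of_mul_sq_le_mul (by positivity) (norm_nonneg _) (norm_nonneg _) hquad
    rwa [div_div_eq_mul_div, mul_comm] at this
  refine ⟨hdist, ?_⟩
  calc ‖θt - θhat‖ ^ 2 ≤ (2 * H / μbar) ^ 2 := pow_le_pow_left₀ (norm_nonneg _) hdist 2
    _ = 4 * H ^ 2 / μbar ^ 2 := by ring
    _ ≤ 36 * H ^ 2 / μbar ^ 2 := by gcongr; norm_num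

theorem stmt9 (d s sstar : ℕ) (μbar : ℝ) (hμ : 0 < μbar)
    (f : EuclideanSpace ℝ (Fin d) → ℝ) (hf : Differentiable ℝ f)
    (hrsc : ∀ θ1 θ2 : EuclideanSpace ℝ (Fin d), (supp (θ1 - θ2)).card ≤ s + sstar →
      f θ1 - f θ2 - ⟪gradient f θ2, θ1 - θ2⟫ ≥ μbar / 2 * ‖θ1 - θ2‖ ^ 2)
    (θt θhat : EuclideanSpace ℝ (Fin d))
    (hθt : (supp θt).card ≤ s) (hθhat : (supp θhat).card ≤ sstar)
    (hle : f θt ≤ f θhat) :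
    ‖θt - θhat‖ ≤ 2 * ‖HT (s + sstar) (gradient f θhat)‖ / μbar ∧
      ‖θt - θhat‖ ^ 2 ≤ 36 * ‖HT (s + sstar) (gradient f θhat)‖ ^ 2 / μbar ^ 2 :=
  stmt9_general d s sstar μbar hμ f hrsc θt θhat hθt hθhat hle
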